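/- Let α ∈ (0,1) and n ∈ ℕ. Then every complex root ξ₀ of the polynomial π(ξ; 0) = ξ^{n+1} − Σ_{k=0}^{n} c^{n+1}_k ξ^k satisfies |ξ₀| ≤ 1. -/

import Mathlib

/-!
The coefficients are nonnegative because `x ↦ (x + 1)^p - x^p` decreases for `p ∈ [0, 1]` (concavity),
and they sum to one because, written through these increments, they telescope. A root `ξ` with
`‖ξ‖ > 1` would then satisfy `‖ξ‖^(n+1) ≤ ∑ c_k ‖ξ‖^k ≤ ‖ξ‖^n`, which is absurd. -/

open scoped BigOperators

/-- The L1 coefficients `c^{n+1}_k` for the discrete Caputo derivative: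
`c^{n+1}_0 = (n+1)^{1-α} - n^{1-α}` and, for `1 ≤ k ≤ n`,
`c^{n+1}_k = 2(n+1-k)^{1-α} - (n+2-k)^{1-α} - (n-k)^{1-α}`. -/
noncomputable def caputoCoeff (α : ℝ) (n k : ℕ) : ℝ :=
  if k = 0 then ((n : ℝ) + 1) ^ (1 - α) - (n : ℝ) ^ (1 - α)
  else 2 * ((n : ℝ) + 1 - (k : ℝ)) ^ (1 - α) - ((n : ℝ) + 2 - (k : ℝ)) ^ (1 - α)
    - ((n : ℝ) - (k : ℝ)) ^ (1 - α)

theorem norm_le_one_of_pow_eq_sum {𝕜 : Type*} [NormedDivisionRing 𝕜] {n : ℕ} {a : ℕ → 𝕜}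
    (ha : ∑ k ∈ Finset.range (n + 1), ‖a k‖ ≤ 1) {z : 𝕜}
    (hz : z ^ (n + 1) = ∑ k ∈ Finset.range (n + 1), a k * z ^ k) :
    ‖z‖ ≤ 1 := by
  by_contra! hz1
  have hbound : ‖z‖ ^ (n + 1) ≤ ‖z‖ ^ n :=
    calc ‖z‖ ^ (n + 1) = ‖∑ k ∈ Finset.range (n + 1), a k * z ^ k‖ := by rw [← hz, norm_pow]
      _ ≤ ∑ k ∈ Finset.range (n + 1), ‖a k‖ * ‖z‖ ^ k := by
          simpa only [norm_mul, norm_pow] using norm_sum_le _ fun k ↦ a k * z ^ k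
      _ ≤ ∑ k ∈ Finset.range (n + 1), ‖a k‖ * ‖z‖ ^ n := by
          gcongr with k hk
          · exact hz1.le
          · exact Nat.lt_succ_iff.mp (Finset.mem_range.mp hk)
      _ = (∑ k ∈ Finset.range (n + 1), ‖a k‖) * ‖z‖ ^ n := (Finset.sum_mul _ _ _).symm
      _ ≤ ‖z‖ ^ n := mul_le_of_le_one_left (by positivity) ha
  exact (pow_lt_pow_right₀ hz1 n.lt_succ_self).not_ge hbound

noncomputable def rpowIncrement (p x : ℝ) : ℝ := (x + 1) ^ p - x ^ p

theorem rpowIncrement_nonneg {p x : ℝ} (hp : 0 ≤ p) (hx : 0 ≤ x) : 0 ≤ rpowIncrement p x :=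
  sub_nonneg.mpr (Real.rpow_le_rpow hx (by linarith) hp)

theorem rpowIncrement_succ_le {p x : ℝ} (hp₀ : 0 ≤ p) (hp₁ : p ≤ 1) (hx : 0 ≤ x) :
    rpowIncrement p (x + 1) ≤ rpowIncrement p x := by
  have hmid := (Real.concaveOn_rpow hp₀ hp₁).2 (Set.mem_Ici.mpr hx)
    (Set.mem_Ici.mpr (by linarith : 0 ≤ x + 2)) (by norm_num : (0 : ℝ) ≤ 1 / 2)
    (by norm_num : (0 : ℝ) ≤ 1 / 2) (by norm_num)
  simp only [smul_eq_mul] at hmid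
  rw [show 1 / 2 * x + 1 / 2 * (x + 2) = x + 1 by ring] at hmid
  unfold rpowIncrement
  rw [show x + 1 + 1 = x + 2 by ring]
  linarith

theorem rpowIncrement_zero {p : ℝ} (hp : p ≠ 0) : rpowIncrement p 0 = 1 := by
  simp [rpowIncrement, Real.zero_rpow hp]

theorem caputoCoeff_zero (α : ℝ) (n : ℕ) : caputoCoeff α n 0 = rpowIncrement (1 - α) n := by
  simp [caputoCoeff, rpowIncrement]

theorem caputoCoeff_succ (α : ℝ) (n k : ℕ) :
    caputoCoeff α n (k + 1) =
      rpowIncrement (1 - α) (n - (k + 1 : ℕ)) - rpowIncrement (1 - α) (n - k) := by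
  simp only [caputoCoeff, rpowIncrement, Nat.succ_ne_zero, if_false]
  push_cast
  ring_nf

theorem caputoCoeff_nonneg {α : ℝ} (hα₀ : 0 ≤ α) (hα₁ : α ≤ 1) {n k : ℕ} (hk : k ≤ n) :
    0 ≤ caputoCoeff α n k := by
  cases k with
  | zero => exact caputoCoeff_zero α n ▸ rpowIncrement_nonneg (by linarith) n.cast_nonneg
  | succ k =>
    have hx : (0 : ℝ) ≤ n - (k + 1 : ℕ) := sub_nonneg.mpr (by exact_mod_cast hk)
    have hdiff := rpowIncrement_succ_le (p := 1 - α) (by linarith) (by linarith) hx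
    rw [show (n : ℝ) - (k + 1 : ℕ) + 1 = n - k by push_cast; ring] at hdiff
    rw [caputoCoeff_succ]
    linarith

theorem caputoCoeff_sum {α : ℝ} (hα : α ≠ 1) (n : ℕ) :
    ∑ k ∈ Finset.range (n + 1), caputoCoeff α n k = 1 := by
  let f : ℕ → ℝ := fun k ↦ rpowIncrement (1 - α) (n - k)
  rw [Finset.sum_range_succ', caputoCoeff_zero]
  simp only [caputoCoeff_succ]
  rw [Finset.sum_range_sub f n]
  simp only [f, sub_self, Nat.cast_zero, sub_zero]
  rw [rpowIncrement_zero (sub_ne_zero.mpr hα.symm)]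
  ring

/-- every root of `π(ξ; 0) = ξ^{n+1} - Σ_{k=0}^n c^{n+1}_k ξ^k`
has modulus `≤ 1`. -/
theorem zero_stability_root_abs_le_one (α : ℝ) (hα : α ∈ Set.Ioo (0 : ℝ) 1) (n : ℕ)
    (ξ₀ : ℂ)
    (hroot : ξ₀ ^ (n + 1)
      - ∑ k ∈ Finset.range (n + 1), (caputoCoeff α n k : ℂ) * ξ₀ ^ k = 0) :
    ‖ξ₀‖ ≤ 1 := by
  obtain ⟨hα₀, hα₁⟩ := hα
  have hnorm_sum : ∑ k ∈ Finset.range (n + 1), ‖(caputoCoeff α n k : ℂ)‖ = 1 := by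
    rw [← caputoCoeff_sum hα₁.ne n]
    refine Finset.sum_congr rfl fun k hk ↦ ?_
    rw [Complex.norm_real, Real.norm_of_nonneg
      (caputoCoeff_nonneg hα₀.le hα₁.le (Nat.lt_succ_iff.mp (Finset.mem_range.mp hk)))]
  exact norm_le_one_of_pow_eq_sum hnorm_sum.le (sub_eq_zero.mp hroot)
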